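/- For every $m \in (0,1]$, every $\lambda > 0$ and every $t \ge 0$, $e^{-t} \sum_{n=0}^{+\infty} \frac{t^n \lambda^n}{n!} \Big( \sum_{(x_0,\dots,x_n) \in L_n} m^{\Gamma(x_n)} \Big) \le \exp\Big\{ t \Big[ \lambda \Big( N m + \frac{1}{m} \Big) - 1 \Big] \Big\}$; in particular the series on the left converges. -/

import Mathlib

/-- Adjacency on the rooted regular tree `𝕋^N`: vertices are finite sequences with
entries in `Fin N` (the empty list is the root `O`); `x` and `y` are adjacent iff
one is obtained from the other by prepending one letter. -/
def TreeAdj (N : ℕ) (x y : List (Fin N)) : Prop :=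
  (∃ a : Fin N, y = a :: x) ∨ (∃ a : Fin N, x = a :: y)

/-- A walk of length `n` from the root `O`. -/
def IsWalkFromRoot (N n : ℕ) (p : Fin (n + 1) → List (Fin N)) : Prop :=
  p 0 = [] ∧ ∀ j : Fin n, TreeAdj N (p j.castSucc) (p j.succ)

/-
A vertex of depth `k` has `N` children, of depth `k + 1`, and at most one parent, of depth `k - 1`.
Extending the walks of length `n` by one step therefore multiplies `∑_{L_n} m ^ Γ(x_n)` by at most
`C = N m + 1 / m`, so this sum is at most `C ^ n`, and the series is dominated termwise by the
exponential series of `t λ C`.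
-/

namespace TreeAdj

variable {N : ℕ}

/-- Children `a :: x` are coded by `some a`, the parent `x.tail` by `none`. -/
def code (x : List (Fin N)) (y : {y // TreeAdj N x y}) : Option (Fin N) :=
  if y.1.length < x.length then none else y.1.head?

lemma code_injective (x : List (Fin N)) : Function.Injective (code x) := by
  rintro ⟨y, ⟨a, rfl⟩ | ⟨a, rfl⟩⟩ ⟨z, ⟨b, rfl⟩ | ⟨b, ⟨⟩⟩⟩ h <;>
    simp_all [code]

instance (x : List (Fin N)) : Finite {y // TreeAdj N x y} :=
  Finite.of_injective _ (code_injective x)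

lemma tsum_pow_length_le (x : List (Fin N)) {m : ℝ} (hm : 0 < m) :
    ∑' y : {y // TreeAdj N x y}, m ^ y.1.length ≤ m ^ x.length * (N * m + 1 / m) := by
  let bound : Option (Fin N) → ℝ := fun c => c.elim (m ^ x.length / m) fun _ => m ^ (x.length + 1)
  have le_bound (y : {y // TreeAdj N x y}) : m ^ y.1.length ≤ bound (code x y) := by
    rcases y with ⟨y, ⟨a, rfl⟩ | ⟨a, rfl⟩⟩
    · simp [code, bound]
    · simp [code, bound, pow_succ, hm.ne']
  calc ∑' y : {y // TreeAdj N x y}, m ^ y.1.length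
      ≤ ∑' c, bound c :=
        Summable.tsum_le_tsum_of_inj _ (code_injective x)
          (fun c _ => by cases c <;> simp [bound] <;> positivity) le_bound .of_finite .of_finite
    _ = m ^ x.length * (N * m + 1 / m) := by
        rw [tsum_fintype, Fintype.sum_option]
        simp [bound, pow_succ]
        ring

end TreeAdj

lemma isWalkFromRoot_snoc_iff {N n : ℕ} {q : Fin (n + 1) → List (Fin N)} {y : List (Fin N)} :
    IsWalkFromRoot N (n + 1) (Fin.snoc q y) ↔
      IsWalkFromRoot N n q ∧ TreeAdj N (q (Fin.last n)) y := by
  have h0 : (0 : Fin (n + 2)) = Fin.castSucc 0 := rfl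
  simp only [IsWalkFromRoot, Fin.forall_fin_succ', h0, Fin.succ_castSucc, Fin.succ_last,
    Fin.snoc_castSucc, Fin.snoc_last, and_assoc]

abbrev WalkFromRoot (N n : ℕ) := {p : Fin (n + 1) → List (Fin N) // IsWalkFromRoot N n p}

namespace WalkFromRoot

variable {N n : ℕ}

lemma isWalkFromRoot_init_and_treeAdj_last (p : WalkFromRoot N (n + 1)) :
    IsWalkFromRoot N n (Fin.init p.1) ∧ TreeAdj N (Fin.init p.1 (Fin.last n)) (p.1 (Fin.last _)) :=
  isWalkFromRoot_snoc_iff.mp ((Fin.snoc_init_self p.1).symm ▸ p.2)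

def snocEquiv :
    WalkFromRoot N (n + 1) ≃ Σ q : WalkFromRoot N n, {y // TreeAdj N (q.1 (Fin.last n)) y} where
  toFun p :=
    ⟨⟨Fin.init p.1, (isWalkFromRoot_init_and_treeAdj_last p).1⟩,
      ⟨p.1 (Fin.last _), (isWalkFromRoot_init_and_treeAdj_last p).2⟩⟩
  invFun s := ⟨Fin.snoc s.1.1 s.2.1, isWalkFromRoot_snoc_iff.mpr ⟨s.1.2, s.2.2⟩⟩
  left_inv p := Subtype.ext (Fin.snoc_init_self p.1)
  right_inv := by
    rintro ⟨⟨q, hq⟩, ⟨y, hy⟩⟩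
    refine Sigma.ext (Subtype.ext ?_) ((Subtype.heq_iff_coe_eq ?_).mpr ?_) <;> simp

instance : Unique (WalkFromRoot N 0) where
  default := ⟨fun _ => [], rfl, Fin.elim0⟩
  uniq p := Subtype.ext <| funext fun j => by rw [Fin.fin_one_eq_zero j, p.2.1]

instance instFinite : ∀ n, Finite (WalkFromRoot N n)
  | 0 => inferInstance
  | n + 1 => have := instFinite n; .of_equiv _ snocEquiv.symm

variable (N n) in
/-- The paper's `∑_{(x_0,…,x_n) ∈ L_n} m ^ Γ(x_n)`. -/
noncomputable def weight (m : ℝ) : ℝ :=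
  ∑' p : WalkFromRoot N n, m ^ (p.1 (Fin.last n)).length

lemma weight_nonneg {m : ℝ} (hm : 0 < m) : 0 ≤ weight N n m :=
  tsum_nonneg fun _ => by positivity

lemma weight_zero (m : ℝ) : weight N 0 m = 1 := by
  rw [weight, (hasSum_unique _).tsum_eq]
  rfl

lemma weight_succ_le {m : ℝ} (hm : 0 < m) :
    weight N (n + 1) m ≤ weight N n m * (N * m + 1 / m) := by
  calc weight N (n + 1) m
      = ∑' s : Σ q : WalkFromRoot N n, {y // TreeAdj N (q.1 (Fin.last n)) y}, m ^ s.2.1.length :=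
        snocEquiv.tsum_eq (fun s => m ^ s.2.1.length)
    _ = ∑' q : WalkFromRoot N n, ∑' y : {y // TreeAdj N (q.1 (Fin.last n)) y}, m ^ y.1.length :=
        Summable.tsum_sigma' (fun _ => .of_finite) .of_finite
    _ ≤ ∑' q : WalkFromRoot N n, m ^ (q.1 (Fin.last n)).length * (N * m + 1 / m) :=
        Summable.tsum_le_tsum (fun q => TreeAdj.tsum_pow_length_le _ hm) .of_finite .of_finite
    _ = weight N n m * (N * m + 1 / m) := tsum_mul_right

variable (N) in
lemma weight_le_pow {m : ℝ} (hm : 0 < m) : ∀ n, weight N n m ≤ (N * m + 1 / m) ^ n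
  | 0 => (weight_zero m).le
  | n + 1 => by
    rw [pow_succ]
    exact (weight_succ_le hm).trans (by gcongr; exact weight_le_pow hm n)

end WalkFromRoot

section ExpSeries

variable {a : ℕ → ℝ} {C x : ℝ}

lemma pow_div_factorial_mul_le (hx : 0 ≤ x) (ha : ∀ n, a n ≤ C ^ n) (n : ℕ) :
    x ^ n / n.factorial * a n ≤ (x * C) ^ n / n.factorial := by
  rw [mul_pow, mul_comm (x ^ n), mul_div_assoc, mul_comm]
  gcongr
  exact ha n

lemma summable_pow_div_factorial_mul (hx : 0 ≤ x) (ha₀ : ∀ n, 0 ≤ a n) (ha : ∀ n, a n ≤ C ^ n) :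
    Summable fun n => x ^ n / n.factorial * a n :=
  .of_nonneg_of_le (fun n => by have := ha₀ n; positivity) (pow_div_factorial_mul_le hx ha)
    (Real.summable_pow_div_factorial _)

lemma tsum_pow_div_factorial_mul_le_exp (hx : 0 ≤ x) (ha₀ : ∀ n, 0 ≤ a n)
    (ha : ∀ n, a n ≤ C ^ n) :
    ∑' n, x ^ n / n.factorial * a n ≤ Real.exp (x * C) := by
  rw [Real.exp_eq_exp_ℝ, NormedSpace.exp_eq_tsum_div]
  exact Summable.tsum_le_tsum (pow_div_factorial_mul_le hx ha)
    (summable_pow_div_factorial_mul hx ha₀ ha) (Real.summable_pow_div_factorial _)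

end ExpSeries

theorem exponential_bound_series_general (N : ℕ)
    (m : ℝ) (hm0 : 0 < m) (lam : ℝ) (hlam : 0 < lam) (t : ℝ) (ht : 0 ≤ t) :
    (∀ n : ℕ, Summable (fun p : {p : Fin (n + 1) → List (Fin N) // IsWalkFromRoot N n p} =>
      m ^ (p.1 (Fin.last n)).length)) ∧
    Summable (fun n : ℕ => t ^ n * lam ^ n / (n.factorial : ℝ) *
      ∑' p : {p : Fin (n + 1) → List (Fin N) // IsWalkFromRoot N n p},
        m ^ (p.1 (Fin.last n)).length) ∧
    Real.exp (-t) * ∑' n : ℕ, t ^ n * lam ^ n / (n.factorial : ℝ) *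
        ∑' p : {p : Fin (n + 1) → List (Fin N) // IsWalkFromRoot N n p},
          m ^ (p.1 (Fin.last n)).length
      ≤ Real.exp (t * (lam * ((N : ℝ) * m + 1 / m) - 1)) := by
  have htlam : 0 ≤ t * lam := by positivity
  have weight_nonneg n := WalkFromRoot.weight_nonneg (N := N) (n := n) hm0
  have weight_le := WalkFromRoot.weight_le_pow N hm0
  simp only [← mul_pow]
  refine ⟨fun n => .of_finite, summable_pow_div_factorial_mul htlam weight_nonneg weight_le, ?_⟩
  calc Real.exp (-t) * ∑' n, (t * lam) ^ n / n.factorial * WalkFromRoot.weight N n m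
      ≤ Real.exp (-t) * Real.exp (t * lam * (N * m + 1 / m)) := by
        gcongr
        exact tsum_pow_div_factorial_mul_le_exp htlam weight_nonneg weight_le
    _ = Real.exp (t * (lam * (N * m + 1 / m) - 1)) := by
        rw [← Real.exp_add]
        ring_nf

/-- For every `m ∈ (0,1]`, `λ > 0` and `t ≥ 0`,
`e^{-t} ∑_{n≥0} (t^n λ^n / n!) ( ∑_{(x_0,…,x_n) ∈ L_n} m^{Γ(x_n)} )
  ≤ exp{ t [ λ (N m + 1/m) - 1 ] }`;
in particular the series on the left (and each inner sum) converges. -/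
theorem exponential_bound_series (N : ℕ) (hN : 1 ≤ N)
    (m : ℝ) (hm0 : 0 < m) (hm1 : m ≤ 1) (lam : ℝ) (hlam : 0 < lam) (t : ℝ) (ht : 0 ≤ t) :
    (∀ n : ℕ, Summable (fun p : {p : Fin (n + 1) → List (Fin N) // IsWalkFromRoot N n p} =>
      m ^ (p.1 (Fin.last n)).length)) ∧
    Summable (fun n : ℕ => t ^ n * lam ^ n / (n.factorial : ℝ) *
      ∑' p : {p : Fin (n + 1) → List (Fin N) // IsWalkFromRoot N n p},
        m ^ (p.1 (Fin.last n)).length) ∧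
    Real.exp (-t) * ∑' n : ℕ, t ^ n * lam ^ n / (n.factorial : ℝ) *
        ∑' p : {p : Fin (n + 1) → List (Fin N) // IsWalkFromRoot N n p},
          m ^ (p.1 (Fin.last n)).length
      ≤ Real.exp (t * (lam * ((N : ℝ) * m + 1 / m) - 1)) :=
  exponential_bound_series_general N m hm0 lam hlam t ht
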